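/- Fix integers K ≥ m ≥ 1, ε > 0, c : T_{K,m} → [0,1/K], and x ∈ [0,1]^K. Suppose during the run of the partition algorithm on x the assignment P ← P̂ occurs, and suppose that for every ancestor Q ⪯ P and every child Q_j of Q in T_{K,m}, the inequality |gap_{Q_j}(x) − c(Q)·range_Q(x)| ≤ 10Kε does NOT hold. Then for every y ∈ [0,1]^K with ‖x − y‖_{ℓ∞} ≤ ε, the assignment P ← P̂ also occurs when the algorithm is run on y (with the same parameters c and ε). -/

import Mathlib

open Classical

noncomputable section

namespace MPB

variable (K m : ℕ)

/-- Max of `x` over a finite set of coordinates. -/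
def fmax (x : Fin K → ℝ) (S : Finset (Fin K)) : ℝ := sSup (x '' ↑S)

/-- Min of `x` over a finite set of coordinates. -/
def fmin (x : Fin K → ℝ) (S : Finset (Fin K)) : ℝ := sInf (x '' ↑S)

/-- range_B(x) = max_{k∈B} x(k) - min_{k∈B} x(k). -/
def rangeX (x : Fin K → ℝ) (B : Finset (Fin K)) : ℝ := fmax K x B - fmin K x B

/-- gap of the child obtained by splitting `B` into `T > B \ T`:
gap = min_{k∈T} x(k) - max_{ℓ∈B\T} x(ℓ). -/
def gapX (x : Fin K → ℝ) (T B : Finset (Fin K)) : ℝ := fmin K x T - fmax K x (B \ T)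

/-- i(P): the largest `i` such that the first `i` parts of the ordered partition `L`
have total size at most `m`. -/
def iIdx (L : List (Finset (Fin K))) : ℕ :=
  Nat.findGreatest (fun i => ((L.take i).map Finset.card).sum ≤ m) L.length

/-- A(P): the union of the first i(P) parts (the coordinates already identified as
belonging to the top m). -/
def Aset (L : List (Finset (Fin K))) : Finset (Fin K) :=
  (L.take (iIdx K m L)).foldr (· ∪ ·) ∅

/-- B(P): the currently undecided part; `∅` if `|A(P)| = m`, else the part S_{i(P)+1}. -/
def Bset (L : List (Finset (Fin K))) : Finset (Fin K) :=
  if (Aset K m L).card = m then ∅ else L.getD (iIdx K m L) ∅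

/-- A vertex of the tree T_{K,m} is encoded by the sequence of splits leading to it from
the root (head = most recently chosen top part): this recovers its underlying ordered
partition, by splitting at each step the then-current undecided set B into `T > B \ T`. -/
def partitionOf : List (Finset (Fin K)) → List (Finset (Fin K))
  | [] => [Finset.univ]
  | T :: l =>
    let L := partitionOf l
    let i := iIdx K m L
    L.take i ++ [T, L.getD i ∅ \ T] ++ L.drop (i + 1)

/-- A(P) for a vertex of T_{K,m}. -/
def Anode (l : List (Finset (Fin K))) : Finset (Fin K) := Aset K m (partitionOf K m l)

/-- B(P) for a vertex of T_{K,m}. -/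
def Bnode (l : List (Finset (Fin K))) : Finset (Fin K) := Bset K m (partitionOf K m l)

/-- Membership in T_{K,m}: each successive split must cut the current undecided set B
into a nonempty strict subset (the new top part) and the rest. The root is `[]`, a
vertex is a leaf iff its `Bnode` is empty, `T :: l` is a child of `l`, and the ancestors
of a vertex are exactly its list suffixes. -/
def Valid : List (Finset (Fin K)) → Prop
  | [] => True
  | T :: l => Valid l ∧ T.Nonempty ∧ T ⊂ Bnode K m l

/-- The elements of `B` sorted by `x` in (weakly) decreasing order,
ties broken by coordinate index (stability of merge sort). -/
def sortedB (x : Fin K → ℝ) (B : Finset (Fin K)) : List (Fin K) :=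
  (B.sort (· ≤ ·)).mergeSort (fun a b => decide (x b ≤ x a))

/-- The set `{a_1, …, a_j}` of the `j` largest coordinates of `B` under `x`. -/
def topSet (x : Fin K → ℝ) (B : Finset (Fin K)) (j : ℕ) : Finset (Fin K) :=
  ((sortedB K x B).take j).toFinset

/-- Line 7 of Algorithm 1: the algorithm, currently at the vertex `l`, returns `l`
because for some ancestor `q ⪯ l` and some child `q_j` of `q` (splitting B(q) at the
`j`-th position of the `x`-sorted order), the quantity `gap_{q_j}(x) - c(q)·range_q(x)`
is within `(d(l,q)+1)·6ε` of zero. -/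
def stopAt (c : List (Finset (Fin K)) → ℝ) (ε : ℝ) (x : Fin K → ℝ)
    (l : List (Finset (Fin K))) : Prop :=
  ∃ q ∈ l.tails, ∃ j, 1 ≤ j ∧ j < (Bnode K m q).card ∧
    |gapX K x (topSet K x (Bnode K m q) j) (Bnode K m q) - c q * rangeX K x (Bnode K m q)|
      ≤ ((l.length - q.length + 1 : ℕ) : ℝ) * (6 * ε)

/-- Lines 10-15 of Algorithm 1: move from `l` to the child `l_j` for the smallest
`j ∈ {1, …, ℓ-1}` with `gap_{l_j}(x) ≥ c(l)·range_l(x)`. -/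
def descend (c : List (Finset (Fin K)) → ℝ) (x : Fin K → ℝ)
    (l : List (Finset (Fin K))) : List (Finset (Fin K)) :=
  if h : ∃ j, 1 ≤ j ∧ j < (Bnode K m l).card ∧
      c l * rangeX K x (Bnode K m l)
        ≤ gapX K x (topSet K x (Bnode K m l) j) (Bnode K m l)
  then topSet K x (Bnode K m l) (Nat.find h) :: l
  else l

/-- The while loop of Algorithm 1, with fuel (the tree T_{K,m} has depth < K, so fuel K
suffices for the loop to terminate as in the paper). -/
def run (c : List (Finset (Fin K)) → ℝ) (ε : ℝ) (x : Fin K → ℝ) :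
    ℕ → List (Finset (Fin K)) → List (Finset (Fin K))
  | 0, l => l
  | n + 1, l =>
    if Bnode K m l = ∅ then l
    else if stopAt K m c ε x l then l
    else run c ε x n (descend K m c x l)

/-- The vertex P_{c,ε}(x) ∈ T_{K,m} output by Algorithm 1 on input x. The vertices
visited by the while loop are exactly the suffixes of the output. -/
def Pmap (c : List (Finset (Fin K)) → ℝ) (ε : ℝ) (x : Fin K → ℝ) :
    List (Finset (Fin K)) :=
  run K m c ε x K []

/-!
Passing from `x` to `y` with `‖x - y‖∞ ≤ ε` moves every range by at most `2ε`, and, since the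
set of the `j` largest coordinates maximizes the gap among all `j`-subsets, every optimal gap
by at most `2ε`; so each margin `gap - c·range` moves by at most `4ε`. Along the path to `P`
all margins of `x` exceed `10Kε` in absolute value, while the depth is `< K`, so the stopping
thresholds are `≤ 6Kε`. Hence on `y` the algorithm does not stop on that path, each margin keeps
its sign (so the same index `j` is chosen), and the chosen split has `x`-gap `> 2ε`, so `y`
selects the same top set.
-/

variable {K m}

section Extrema

variable {x y : Fin K → ℝ} {ε : ℝ} {S : Finset (Fin K)}

lemma le_fmax {a : Fin K} (ha : a ∈ S) : x a ≤ fmax K x S :=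
  le_csSup ((S.finite_toSet.image x).bddAbove) ⟨a, ha, rfl⟩

lemma fmin_le {a : Fin K} (ha : a ∈ S) : fmin K x S ≤ x a :=
  csInf_le ((S.finite_toSet.image x).bddBelow) ⟨a, ha, rfl⟩

lemma exists_mem_fmax_eq (hS : S.Nonempty) : ∃ a ∈ S, fmax K x S = x a := by
  obtain ⟨a, ha, h⟩ :=
    ((Finset.coe_nonempty.mpr hS).image x).csSup_mem (S.finite_toSet.image x)
  exact ⟨a, ha, h.symm⟩

lemma exists_mem_fmin_eq (hS : S.Nonempty) : ∃ a ∈ S, fmin K x S = x a := by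
  obtain ⟨a, ha, h⟩ :=
    ((Finset.coe_nonempty.mpr hS).image x).csInf_mem (S.finite_toSet.image x)
  exact ⟨a, ha, h.symm⟩

lemma rangeX_nonneg (hS : S.Nonempty) : 0 ≤ rangeX K x S := by
  obtain ⟨a, ha⟩ := hS
  exact sub_nonneg.mpr ((fmin_le ha).trans (le_fmax ha))

lemma fmax_le_fmax_add (h : ∀ i, y i ≤ x i + ε) (hS : S.Nonempty) :
    fmax K y S ≤ fmax K x S + ε := by
  obtain ⟨a, ha, hmax⟩ := exists_mem_fmax_eq (x := y) hS
  linarith [h a, le_fmax (x := x) ha]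

lemma fmin_le_fmin_add (h : ∀ i, y i ≤ x i + ε) (hS : S.Nonempty) :
    fmin K y S ≤ fmin K x S + ε := by
  obtain ⟨a, ha, hmin⟩ := exists_mem_fmin_eq (x := x) hS
  linarith [h a, fmin_le (x := y) ha]

lemma abs_rangeX_sub_le (hxy : ∀ i, |x i - y i| ≤ ε) (hS : S.Nonempty) :
    |rangeX K y S - rangeX K x S| ≤ 2 * ε := by
  have hyx (i : Fin K) : y i ≤ x i + ε := by linarith [(abs_sub_le_iff.mp (hxy i)).2]
  have hxy' (i : Fin K) : x i ≤ y i + ε := by linarith [(abs_sub_le_iff.mp (hxy i)).1]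
  rw [abs_le]
  unfold rangeX
  constructor <;>
    linarith [fmax_le_fmax_add hyx hS, fmax_le_fmax_add hxy' hS,
      fmin_le_fmin_add hyx hS, fmin_le_fmin_add hxy' hS]

end Extrema

section TopSet

variable {x y : Fin K → ℝ} {ε : ℝ} {B : Finset (Fin K)} {j : ℕ}

lemma sortedB_perm (x : Fin K → ℝ) (B : Finset (Fin K)) :
    (sortedB K x B).Perm (B.sort (· ≤ ·)) :=
  List.mergeSort_perm _ _

lemma mem_sortedB {a : Fin K} : a ∈ sortedB K x B ↔ a ∈ B := by
  rw [(sortedB_perm x B).mem_iff, Finset.mem_sort]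

lemma sortedB_nodup (x : Fin K → ℝ) (B : Finset (Fin K)) : (sortedB K x B).Nodup :=
  (sortedB_perm x B).nodup_iff.mpr (B.sort_nodup _)

lemma length_sortedB (x : Fin K → ℝ) (B : Finset (Fin K)) :
    (sortedB K x B).length = B.card := by
  rw [(sortedB_perm x B).length_eq, Finset.length_sort]

lemma sortedB_pairwise (x : Fin K → ℝ) (B : Finset (Fin K)) :
    (sortedB K x B).Pairwise (fun a b => x b ≤ x a) := by
  refine (List.pairwise_mergeSort (fun a b c hab hbc => ?_) (fun a b => ?_) _).imp
    of_decide_eq_true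
  · simp only [decide_eq_true_eq] at *
    exact hbc.trans hab
  · simpa only [Bool.or_eq_true, decide_eq_true_eq] using le_total (x b) (x a)

lemma topSet_subset (x : Fin K → ℝ) (B : Finset (Fin K)) (j : ℕ) : topSet K x B j ⊆ B :=
  fun _ ha => mem_sortedB.mp (List.mem_of_mem_take (List.mem_toFinset.mp ha))

lemma card_topSet (hj : j ≤ B.card) : (topSet K x B j).card = j := by
  rw [topSet, List.toFinset_card_of_nodup ((List.take_sublist j _).nodup (sortedB_nodup x B)),
    List.length_take, length_sortedB]
  omega

lemma topSet_nonempty (hj1 : 1 ≤ j) (hj2 : j ≤ B.card) : (topSet K x B j).Nonempty := by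
  rw [← Finset.card_pos, card_topSet hj2]
  omega

lemma topSet_ssubset (hj : j < B.card) : topSet K x B j ⊂ B :=
  Finset.ssubset_iff_subset_ne.mpr ⟨topSet_subset x B j, fun h => by
    have hcard := card_topSet (x := x) hj.le
    rw [h] at hcard
    omega⟩

lemma sdiff_topSet_nonempty (hj : j < B.card) : (B \ topSet K x B j).Nonempty := by
  rw [← Finset.card_pos, Finset.card_sdiff_of_subset (topSet_subset x B j), card_topSet hj.le]
  omega

lemma le_of_mem_topSet {a b : Fin K} (ha : a ∈ topSet K x B j)
    (hb : b ∈ B \ topSet K x B j) : x b ≤ x a := by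
  obtain ⟨hbB, hbT⟩ := Finset.mem_sdiff.mp hb
  have hsplit := sortedB_pairwise x B
  rw [← List.take_append_drop j (sortedB K x B), List.pairwise_append] at hsplit
  have hb' := mem_sortedB (x := x) |>.mpr hbB
  rw [← List.take_append_drop j (sortedB K x B), List.mem_append] at hb'
  rcases hb' with hb' | hb'
  · exact absurd (List.mem_toFinset.mpr hb') hbT
  · exact hsplit.2.2 a (List.mem_toFinset.mp ha) b hb'

lemma gapX_le_gapX_topSet {S : Finset (Fin K)} (hSB : S ⊆ B) (hS : S.card = j)
    (hj1 : 1 ≤ j) (hj2 : j < B.card) : gapX K x S B ≤ gapX K x (topSet K x B j) B := by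
  have hT : (topSet K x B j).card = j := card_topSet hj2.le
  by_cases hST : S = topSet K x B j
  · rw [hST]
  obtain ⟨s, hsS, hsT⟩ := Finset.not_subset.mp fun h =>
    hST (Finset.eq_of_subset_of_card_le h (by rw [hS, hT]))
  obtain ⟨t, htT, htS⟩ := Finset.not_subset.mp fun h =>
    hST (Finset.eq_of_subset_of_card_le h (by rw [hS, hT])).symm
  obtain ⟨a, haT, hmin⟩ := exists_mem_fmin_eq (x := x) (topSet_nonempty (x := x) hj1 hj2.le)
  obtain ⟨b, hbT, hmax⟩ := exists_mem_fmax_eq (x := x) (sdiff_topSet_nonempty (x := x) hj2)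
  calc gapX K x S B ≤ x s - x t :=
        sub_le_sub (fmin_le hsS) (le_fmax (Finset.mem_sdiff.mpr ⟨topSet_subset x B j htT, htS⟩))
    _ ≤ x a - x b :=
        sub_le_sub (le_of_mem_topSet haT (Finset.mem_sdiff.mpr ⟨hSB hsS, hsT⟩))
          (le_of_mem_topSet htT hbT)
    _ = gapX K x (topSet K x B j) B := by rw [gapX, hmin, hmax]

lemma gapX_topSet_sub_le (hxy : ∀ i, |x i - y i| ≤ ε) (hj1 : 1 ≤ j) (hj2 : j < B.card) :
    gapX K x (topSet K x B j) B - 2 * ε ≤ gapX K y (topSet K y B j) B := by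
  set T := topSet K x B j
  have hyx (i : Fin K) : y i ≤ x i + ε := by linarith [(abs_sub_le_iff.mp (hxy i)).2]
  have hxy' (i : Fin K) : x i ≤ y i + ε := by linarith [(abs_sub_le_iff.mp (hxy i)).1]
  have hopt : gapX K y T B ≤ gapX K y (topSet K y B j) B :=
    gapX_le_gapX_topSet (topSet_subset x B j) (card_topSet hj2.le) hj1 hj2
  have hmin := fmin_le_fmin_add hxy' (topSet_nonempty (x := x) hj1 hj2.le)
  have hmax := fmax_le_fmax_add hyx (sdiff_topSet_nonempty (x := x) hj2)
  unfold gapX at hopt ⊢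
  linarith

lemma abs_gapX_topSet_sub_le (hxy : ∀ i, |x i - y i| ≤ ε) (hj1 : 1 ≤ j) (hj2 : j < B.card) :
    |gapX K y (topSet K y B j) B - gapX K x (topSet K x B j) B| ≤ 2 * ε := by
  have hyx (i : Fin K) : |y i - x i| ≤ ε := by rw [abs_sub_comm]; exact hxy i
  rw [abs_le]
  constructor <;> linarith [gapX_topSet_sub_le hxy hj1 hj2, gapX_topSet_sub_le hyx hj1 hj2]

lemma topSet_eq_of_lt {T : Finset (Fin K)} (hTB : T ⊆ B) (hT : T.card = j) (hj : j ≤ B.card)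
    (hsep : ∀ a ∈ T, ∀ b ∈ B \ T, y b < y a) : topSet K y B j = T := by
  by_contra hne
  have hcard : (topSet K y B j).card = T.card := by rw [card_topSet hj, hT]
  obtain ⟨a, haT, haT'⟩ := Finset.not_subset.mp fun h =>
    hne (Finset.eq_of_subset_of_card_le h hcard.le).symm
  obtain ⟨b, hbT', hbT⟩ := Finset.not_subset.mp fun h =>
    hne (Finset.eq_of_subset_of_card_le h hcard.ge)
  have hlt := hsep a haT b (Finset.mem_sdiff.mpr ⟨topSet_subset y B j hbT', hbT⟩)
  have hle := le_of_mem_topSet hbT' (Finset.mem_sdiff.mpr ⟨hTB haT, haT'⟩)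
  linarith

lemma topSet_eq_of_two_mul_lt_gapX (hxy : ∀ i, |x i - y i| ≤ ε) (hj : j ≤ B.card)
    (hgap : 2 * ε < gapX K x (topSet K x B j) B) : topSet K y B j = topSet K x B j := by
  refine topSet_eq_of_lt (topSet_subset x B j) (card_topSet hj) hj fun a ha b hb => ?_
  have hxa := abs_sub_le_iff.mp (hxy a)
  have hxb := abs_sub_le_iff.mp (hxy b)
  have hmin : fmin K x (topSet K x B j) ≤ x a := fmin_le ha
  have hmax : x b ≤ fmax K x (B \ topSet K x B j) := le_fmax hb
  unfold gapX at hgap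
  linarith

end TopSet

section Margin

variable {x y : Fin K → ℝ} {ε a : ℝ} {B : Finset (Fin K)} {j : ℕ}

/-- `gap_{Q_j}(x) - c(Q)·range_Q(x)` for `B = B(Q)` and `a = c(Q)`. -/
def splitMargin (x : Fin K → ℝ) (a : ℝ) (B : Finset (Fin K)) (j : ℕ) : ℝ :=
  gapX K x (topSet K x B j) B - a * rangeX K x B

lemma abs_splitMargin_sub_le (ha : |a| ≤ 1) (hxy : ∀ i, |x i - y i| ≤ ε) (hj1 : 1 ≤ j)
    (hj2 : j < B.card) : |splitMargin y a B j - splitMargin x a B j| ≤ 4 * ε := by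
  have hB : B.Nonempty := Finset.card_pos.mp (by omega)
  have hgap := abs_gapX_topSet_sub_le hxy hj1 hj2
  have hrange : |a * (rangeX K y B - rangeX K x B)| ≤ 2 * ε := by
    rw [abs_mul]
    calc |a| * |rangeX K y B - rangeX K x B| ≤ 1 * (2 * ε) :=
          mul_le_mul ha (abs_rangeX_sub_le hxy hB) (abs_nonneg _) zero_le_one
      _ = 2 * ε := one_mul _
  calc |splitMargin y a B j - splitMargin x a B j|
      = |(gapX K y (topSet K y B j) B - gapX K x (topSet K x B j) B)
          - a * (rangeX K y B - rangeX K x B)| := by unfold splitMargin; ring_nf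
    _ ≤ |gapX K y (topSet K y B j) B - gapX K x (topSet K x B j) B|
          + |a * (rangeX K y B - rangeX K x B)| := abs_sub _ _
    _ ≤ 4 * ε := by linarith

end Margin

lemma nonneg_iff_nonneg_of_abs_sub_le {a b δ : ℝ} (ha : δ < |a|) (hab : |b - a| ≤ δ) :
    0 ≤ a ↔ 0 ≤ b := by
  rw [abs_le] at hab
  rcases le_or_gt 0 a with h | h
  · rw [abs_of_nonneg h] at ha
    exact ⟨fun _ => by linarith, fun _ => h⟩
  · rw [abs_of_neg h] at ha
    exact ⟨fun h' => absurd h' (not_le.mpr h), fun _ => by linarith⟩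

lemma abs_le_one_of_mem_Icc_one_div {a : ℝ} (hK : 1 ≤ K) (ha : a ∈ Set.Icc (0 : ℝ) (1 / K)) :
    |a| ≤ 1 := by
  rw [abs_of_nonneg ha.1]
  exact ha.2.trans (div_le_one_of_le₀ (by exact_mod_cast hK) (Nat.cast_nonneg K))

section Algorithm

variable {c : List (Finset (Fin K)) → ℝ} {x y : Fin K → ℝ} {ε δ : ℝ}
  {l P : List (Finset (Fin K))}

lemma Valid.of_suffix {q : List (Finset (Fin K))} (hq : q <:+ l) (hl : Valid K m l) :
    Valid K m q := by
  induction l generalizing q with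
  | nil => rw [List.suffix_nil.mp hq]; trivial
  | cons T l ih =>
    rcases List.suffix_cons_iff.mp hq with rfl | hq
    · exact hl
    · exact ih hq hl.1

lemma suffix_descend : l <:+ descend K m c x l := by
  unfold descend
  split
  · exact List.suffix_cons _ _
  · exact List.suffix_rfl

lemma length_descend_le : (descend K m c x l).length ≤ l.length + 1 := by
  unfold descend
  split <;> simp

lemma Valid.descend (hl : Valid K m l) : Valid K m (descend K m c x l) := by
  unfold MPB.descend
  split
  case isTrue h =>
    obtain ⟨hj1, hj2, -⟩ := Nat.find_spec h
    exact ⟨hl, topSet_nonempty hj1 hj2.le, topSet_ssubset hj2⟩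
  case isFalse => exact hl

lemma suffix_run (n : ℕ) : l <:+ run K m c ε x n l := by
  induction n generalizing l with
  | zero => exact List.suffix_rfl
  | succ n ih =>
    rw [run]
    split_ifs
    · exact List.suffix_rfl
    · exact List.suffix_rfl
    · exact suffix_descend.trans ih

lemma length_run_le (n : ℕ) : (run K m c ε x n l).length ≤ l.length + n := by
  induction n generalizing l with
  | zero => exact le_refl _
  | succ n ih =>
    rw [run]
    split_ifs
    · omega
    · omega
    · have := (ih (l := descend K m c x l)).trans (Nat.add_le_add_right length_descend_le n)
      omega

variable (m) in
def FarFromTies (c : List (Finset (Fin K)) → ℝ) (x : Fin K → ℝ) (δ : ℝ)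
    (P : List (Finset (Fin K))) : Prop :=
  ∀ Q, Q <:+ P → ∀ T : Finset (Fin K), T.Nonempty → T ⊂ Bnode K m Q →
    ¬ |gapX K x T (Bnode K m Q) - c Q * rangeX K x (Bnode K m Q)| ≤ δ

lemma FarFromTies.lt_abs_splitMargin (hfar : FarFromTies m c x δ P) {Q : List (Finset (Fin K))}
    (hQ : Q <:+ P) {j : ℕ} (hj1 : 1 ≤ j) (hj2 : j < (Bnode K m Q).card) :
    δ < |splitMargin x (c Q) (Bnode K m Q) j| :=
  not_le.mp (hfar Q hQ _ (topSet_nonempty hj1 hj2.le) (topSet_ssubset hj2))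

section Perturbation

variable (hε : 0 ≤ ε) (hc : ∀ l, Valid K m l → c l ∈ Set.Icc (0 : ℝ) (1 / K))
  (hxy : ∀ i, |x i - y i| ≤ ε) (hfar : FarFromTies m c x (10 * K * ε) P)
include hε hc hxy hfar

lemma not_stopAt (hPK : P.length + 1 ≤ K) (hlP : l <:+ P) (hl : Valid K m l) :
    ¬ stopAt K m c ε y l := by
  rintro ⟨q, hq, j, hj1, hj2, hstop⟩
  rw [List.mem_tails] at hq
  have hdepth : ((l.length - q.length + 1 : ℕ) : ℝ) ≤ K := by
    have := hlP.length_le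
    exact_mod_cast (by omega : l.length - q.length + 1 ≤ K)
  have hK : (1 : ℝ) ≤ K := by exact_mod_cast (by omega : 1 ≤ K)
  have hfarq := hfar.lt_abs_splitMargin (hq.trans hlP) hj1 hj2
  have hclose := abs_splitMargin_sub_le
    (abs_le_one_of_mem_Icc_one_div (by omega) (hc q (hl.of_suffix hq))) hxy hj1 hj2
  have htri := abs_sub_abs_le_abs_sub (splitMargin x (c q) (Bnode K m q) j)
    (splitMargin y (c q) (Bnode K m q) j)
  rw [abs_sub_comm] at htri
  change |splitMargin y (c q) (Bnode K m q) j| ≤ _ at hstop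
  nlinarith [mul_le_mul_of_nonneg_right hdepth (by positivity : (0 : ℝ) ≤ 6 * ε)]

lemma descend_eq (hK : 1 ≤ K) (hlP : l <:+ P) (hl : Valid K m l) :
    descend K m c y l = descend K m c x l := by
  have hcl := hc l hl
  have hKε : 4 * ε ≤ 10 * K * ε := by
    have : (1 : ℝ) ≤ K := by exact_mod_cast hK
    nlinarith
  have hsign {j : ℕ} (hj1 : 1 ≤ j) (hj2 : j < (Bnode K m l).card) :
      0 ≤ splitMargin x (c l) (Bnode K m l) j ↔ 0 ≤ splitMargin y (c l) (Bnode K m l) j :=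
    nonneg_iff_nonneg_of_abs_sub_le (hKε.trans_lt (hfar.lt_abs_splitMargin hlP hj1 hj2))
      (abs_splitMargin_sub_le (abs_le_one_of_mem_Icc_one_div hK hcl) hxy hj1 hj2)
  have hcond (j : ℕ) :
      (1 ≤ j ∧ j < (Bnode K m l).card ∧
        c l * rangeX K x (Bnode K m l) ≤ gapX K x (topSet K x (Bnode K m l) j) (Bnode K m l)) ↔
      (1 ≤ j ∧ j < (Bnode K m l).card ∧
        c l * rangeX K y (Bnode K m l) ≤ gapX K y (topSet K y (Bnode K m l) j) (Bnode K m l)) := by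
    constructor <;> rintro ⟨hj1, hj2, h⟩ <;> refine ⟨hj1, hj2, ?_⟩
    · exact sub_nonneg.mp ((hsign hj1 hj2).mp (sub_nonneg.mpr h))
    · exact sub_nonneg.mp ((hsign hj1 hj2).mpr (sub_nonneg.mpr h))
  unfold descend
  by_cases hx : ∃ j, 1 ≤ j ∧ j < (Bnode K m l).card ∧
      c l * rangeX K x (Bnode K m l) ≤ gapX K x (topSet K x (Bnode K m l) j) (Bnode K m l)
  · have hy := hx.imp fun j => (hcond j).mp
    rw [dif_pos hx, dif_pos hy, Nat.find_congr' (hp := hy) (hq := hx) fun {j} => (hcond j).symm]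
    obtain ⟨hj1, hj2, hge⟩ := Nat.find_spec hx
    have hB : (Bnode K m l).Nonempty := Finset.card_pos.mp (by omega)
    have hmargin := hfar.lt_abs_splitMargin hlP hj1 hj2
    unfold splitMargin at hmargin
    rw [abs_of_nonneg (sub_nonneg.mpr hge)] at hmargin
    have hrange := mul_nonneg hcl.1 (rangeX_nonneg (x := x) hB)
    rw [topSet_eq_of_two_mul_lt_gapX hxy hj2.le (by linarith)]
  · rw [dif_neg hx, dif_neg fun hy => hx (hy.imp fun j => (hcond j).mpr)]

lemma suffix_run_of_suffix_run {T₀ : Finset (Fin K)} (hPK : P.length + 1 ≤ K) (n : ℕ)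
    (hlP : l <:+ P) (hl : Valid K m l) (hrun : (T₀ :: P) <:+ run K m c ε x n l) :
    (T₀ :: P) <:+ run K m c ε y n l := by
  induction n generalizing l with
  | zero => exact absurd (hrun.length_le.trans hlP.length_le) (by simp)
  | succ n ih =>
    rw [run] at hrun ⊢
    by_cases hB : Bnode K m l = ∅
    · rw [if_pos hB] at hrun
      exact absurd (hrun.length_le.trans hlP.length_le) (by simp)
    by_cases hstop : stopAt K m c ε x l
    · rw [if_neg hB, if_pos hstop] at hrun
      exact absurd (hrun.length_le.trans hlP.length_le) (by simp)
    rw [if_neg hB, if_neg hstop] at hrun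
    rw [if_neg hB, if_neg (not_stopAt hε hc hxy hfar hPK hlP hl),
      descend_eq hε hc hxy hfar (by omega) hlP hl]
    set l' := descend K m c x l
    have hlen : l'.length ≤ (T₀ :: P).length := by
      have := hlP.length_le
      have : l'.length ≤ l.length + 1 := length_descend_le
      simp only [List.length_cons]
      omega
    rcases List.suffix_or_suffix_of_suffix (suffix_run n) hrun with h | h
    · rcases List.suffix_cons_iff.mp h with h | h
      · exact h ▸ suffix_run n
      · exact ih h hl.descend hrun
    · rw [← h.eq_of_length (le_antisymm h.length_le hlen)]
      exact suffix_run n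

end Perturbation

end Algorithm

theorem stmt8_general (K m : ℕ) (ε : ℝ) (hε : 0 < ε)
    (c : List (Finset (Fin K)) → ℝ)
    (hc : ∀ l, Valid K m l → c l ∈ Set.Icc (0 : ℝ) (1 / K))
    (x : Fin K → ℝ)
    (T₀ : Finset (Fin K)) (P : List (Finset (Fin K)))
    (hvisit : (T₀ :: P) <:+ Pmap K m c ε x)
    (hfar : ∀ Q, Q <:+ P → ∀ T : Finset (Fin K), T.Nonempty → T ⊂ Bnode K m Q →
      ¬ |gapX K x T (Bnode K m Q) - c Q * rangeX K x (Bnode K m Q)| ≤ 10 * (K : ℝ) * ε)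
    (y : Fin K → ℝ)
    (hxy : ∀ i, |x i - y i| ≤ ε) :
    (T₀ :: P) <:+ Pmap K m c ε y := by
  have hPK : P.length + 1 ≤ K := by
    simpa using hvisit.length_le.trans (length_run_le (l := []) K)
  exact suffix_run_of_suffix_run hε.le hc hxy hfar hPK K List.nil_suffix trivial hvisit

/-- Lemma 2.5, item 2: suppose the assignment P ← P̂ (with P̂ = T₀ :: P) occurs during
the run on x, and for every ancestor Q ⪯ P and every child Q_j of Q in T_{K,m} the
inequality |gap_{Q_j}(x) - c(Q)·range_Q(x)| ≤ 10Kε fails. Then for every y with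
‖x - y‖_∞ ≤ ε the assignment P ← P̂ also occurs when the algorithm is run on y. -/
theorem stmt8 (K m : ℕ) (hm : 1 ≤ m) (hK : m ≤ K) (ε : ℝ) (hε : 0 < ε)
    (c : List (Finset (Fin K)) → ℝ)
    (hc : ∀ l, Valid K m l → c l ∈ Set.Icc (0 : ℝ) (1 / K))
    (x : Fin K → ℝ) (hx : ∀ i, x i ∈ Set.Icc (0 : ℝ) 1)
    (T₀ : Finset (Fin K)) (P : List (Finset (Fin K)))
    (hvisit : (T₀ :: P) <:+ Pmap K m c ε x)
    (hfar : ∀ Q, Q <:+ P → ∀ T : Finset (Fin K), T.Nonempty → T ⊂ Bnode K m Q →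
      ¬ |gapX K x T (Bnode K m Q) - c Q * rangeX K x (Bnode K m Q)| ≤ 10 * (K : ℝ) * ε)
    (y : Fin K → ℝ) (hy : ∀ i, y i ∈ Set.Icc (0 : ℝ) 1)
    (hxy : ∀ i, |x i - y i| ≤ ε) :
    (T₀ :: P) <:+ Pmap K m c ε y :=
  stmt8_general K m ε hε c hc x T₀ P hvisit hfar y hxy

end MPB
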